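/- Let (E,ℒ) be a labeled graph satisfying the standing assumptions with ℰ the smallest normal accommodating set. Let A ∈ ℰ be nonempty and let δ ∈ ℒ*(E) be such that ℒ(AE^{|δ|n}) = {δ^n} for all n ≥ 1 and δ has the smallest length among all words with this property. Then: (1) ℒ(AE^{≥1}) = {δ^n δ′ : n ≥ 0, δ′ an initial path of δ}; (2) every α ∈ ℒ*(E) with A ⊆ r(A,α) satisfies α = δ^m for some m ≥ 1. -/

import Mathlib

/-- The `n`-fold concatenation (power) `w^n` of a finite word `w`. -/
def wpow {Λ : Type*} (w : List Λ) (n : ℕ) : List Λ := (List.replicate n w).flatten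

/-- The finite word `x_{[1,n]}` formed by the first `n` letters of an infinite word `x`. -/
def wordPrefix {Λ : Type*} (x : ℕ → Λ) (n : ℕ) : List Λ := (List.range n).map x

/-- A labeled graph `(E, ℒ)`: a directed graph with vertex set `V` and edge type `Edge`
(with range and source maps), together with a surjective labeling map `lbl` onto the
alphabet `Λ`. -/
structure LabeledGraph (V : Type*) (Λ : Type*) where
  Edge : Type*
  src : Edge → V
  rng : Edge → V
  lbl : Edge → Λ
  lbl_surjective : Function.Surjective lbl

namespace LabeledGraph

variable {V : Type*} {Λ : Type*}

/-- `G.PathLabel u w α` holds iff there is a finite path `λ` of length `≥ 1` in the graph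
with source `u`, range `w` and label word `ℒ(λ) = α`. -/
inductive PathLabel (G : LabeledGraph V Λ) : V → V → List Λ → Prop
  | single (e : G.Edge) : PathLabel G (G.src e) (G.rng e) [G.lbl e]
  | cons (e : G.Edge) {w : V} {α : List Λ} :
      PathLabel G (G.rng e) w α → PathLabel G (G.src e) w (G.lbl e :: α)

variable (G : LabeledGraph V Λ)

/-- `α ∈ ℒ*(E)`: `α` is the label of some path of length `≥ 1`. -/
def IsLabel (α : List Λ) : Prop := ∃ u w, G.PathLabel u w α

/-- The relative range `r(A, α)` of `α` with respect to `A`. -/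
def rel (A : Set V) (α : List Λ) : Set V := {w | ∃ u ∈ A, G.PathLabel u w α}

/-- `r(α) = r(E⁰, α)`. -/
def range' (α : List Λ) : Set V := G.rel Set.univ α

/-- `s(α)`: the set of sources of paths labeled `α`. -/
def srcSet (α : List Λ) : Set V := {u | ∃ w, G.PathLabel u w α}

/-- `ℒ(AEⁿ)`: labels of paths of length `n` with source in `A`. -/
def lblFrom (A : Set V) (n : ℕ) : Set (List Λ) :=
  {α | α.length = n ∧ ∃ u ∈ A, ∃ w, G.PathLabel u w α}

/-- `ℒ(AE^{≥1})`: labels of paths of length `≥ 1` with source in `A`. -/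
def lblFromGe (A : Set V) : Set (List Λ) := {α | ∃ u ∈ A, ∃ w, G.PathLabel u w α}

/-- `ℒ(EⁿA)`: labels of paths of length `n` with range in `A`. -/
def lblTo (A : Set V) (n : ℕ) : Set (List Λ) :=
  {α | α.length = n ∧ ∃ u, ∃ w ∈ A, G.PathLabel u w α}

/-- The generalized vertex `[v]_l`: the set of vertices `w` receiving at least one edge
such that `ℒ(E^k w) = ℒ(E^k v)` for all `1 ≤ k ≤ l`. -/
def gv (v : V) (l : ℕ) : Set V :=
  {w | (∃ e : G.Edge, G.rng e = w) ∧
    ∀ k : ℕ, 1 ≤ k → k ≤ l → G.lblTo {w} k = G.lblTo {v} k}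

/-- Membership in `ℰ`, the smallest collection of subsets of `E⁰` containing all ranges
`r(α)` and closed under relative ranges, finite intersections, finite unions and
relative complements (the smallest normal accommodating set). -/
inductive memE : Set V → Prop
  | empty : memE ∅
  | range (α : List Λ) : α ≠ [] → memE (G.range' α)
  | relRange {A : Set V} (α : List Λ) : α ≠ [] → memE A → memE (G.rel A α)
  | inter {A C : Set V} : memE A → memE C → memE (A ∩ C)
  | union {A C : Set V} : memE A → memE C → memE (A ∪ C)
  | diff {A C : Set V} : memE A → memE C → memE (A \ C)

/-- The standing assumptions on the labeled space `(E, ℒ, ℰ)`: the graph has no sinks and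
the labeled space is weakly left-resolving, set-finite and receiver set-finite. -/
structure Standing : Prop where
  no_sinks : ∀ u : V, ∃ e : G.Edge, G.src e = u
  weakly_left_resolving : ∀ A C : Set V, G.memE A → G.memE C →
    ∀ α : List Λ, α ≠ [] → G.rel (A ∩ C) α = G.rel A α ∩ G.rel C α
  set_finite : ∀ A : Set V, G.memE A → ∀ k : ℕ, 1 ≤ k → (G.lblFrom A k).Finite
  receiver_set_finite : ∀ A : Set V, G.memE A → ∀ k : ℕ, 1 ≤ k → (G.lblTo A k).Finite

/-- `α` is agreeable for `[v]_l` (the condition only depends on `l`):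
`α = βα' = α'γ` with `α', β, γ ∈ ℒ*(E)` and `|β| = |γ| ≤ l`. -/
def Agreeable (l : ℕ) (α : List Λ) : Prop :=
  ∃ α' β γ : List Λ, G.IsLabel α' ∧ G.IsLabel β ∧ G.IsLabel γ ∧
    β.length = γ.length ∧ β.length ≤ l ∧ α = β ++ α' ∧ α = α' ++ γ

/-- `α` (a path with `s(α) ∩ [v]_l ≠ ∅`) is disagreeable for `[v]_l`. -/
def DisagreeableFor (v : V) (l : ℕ) (α : List Λ) : Prop :=
  (G.srcSet α ∩ G.gv v l).Nonempty ∧ ¬ G.Agreeable l α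

/-- The generalized vertex `[v]_l` is disagreeable: there is `N ≥ 1` such that for every
`n > N` there is a path in `ℒ(E^{≥n})` which is disagreeable for `[v]_l`. -/
def DisagreeableGV (v : V) (l : ℕ) : Prop :=
  ∃ N : ℕ, 1 ≤ N ∧ ∀ n : ℕ, N < n →
    ∃ α : List Λ, n ≤ α.length ∧ G.DisagreeableFor v l α

/-- The labeled space `(E, ℒ, ℰ)` is disagreeable. -/
def Disagreeable : Prop :=
  ∀ v : V, ∃ L : ℕ, 1 ≤ L ∧ ∀ l : ℕ, L ≤ l → G.DisagreeableGV v l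

/-- `(α, A)` is a loop: `A ∈ ℰ` is nonempty, `α ∈ ℒ*(E)` and `A ⊆ r(A, α)`. -/
def IsLoop (α : List Λ) (A : Set V) : Prop :=
  α ≠ [] ∧ G.memE A ∧ A.Nonempty ∧ A ⊆ G.rel A α

/-- The loop `(α, A)` has an exit: either (i) there is `β ∈ ℒ(AE^{|α|})` with `β ≠ α` and
`r(A, β) ≠ ∅`, or (ii) `A ⊊ r(A, α)`. -/
def HasExit (α : List Λ) (A : Set V) : Prop :=
  (∃ β : List Λ, β ∈ G.lblFrom A α.length ∧ β ≠ α ∧ (G.rel A β).Nonempty) ∨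
    A ⊂ G.rel A α

/-- `A ∈ ℰ` is minimal: `A ≠ ∅` and `A ∩ C ∈ {A, ∅}` for every `C ∈ ℰ`. -/
def MinimalSet (A : Set V) : Prop :=
  G.memE A ∧ A.Nonempty ∧ ∀ C : Set V, G.memE C → A ∩ C = A ∨ A ∩ C = ∅

/-- A set `Bset ⊆ E⁰` connects to a loop: there are a loop `(α, A)` and finitely many
paths `δ₁, …, δ_m ∈ ℒ*(E)`, none of which is an initial path of another, with
`A ⊆ ∪ᵢ r(Bset, δᵢ)`. -/
def ConnectsToLoop (Bset : Set V) : Prop :=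
  ∃ (α : List Λ) (A : Set V), G.IsLoop α A ∧
    ∃ (m : ℕ) (δ : Fin m → List Λ), (∀ i, G.IsLabel (δ i)) ∧
      (∀ i j, i ≠ j → ¬ (δ i <+: δ j)) ∧ A ⊆ ⋃ i, G.rel Bset (δ i)

/-- Every vertex connects to a loop: every generalized vertex `[v]_l` connects to a loop. -/
def EveryVertexConnectsToLoop : Prop :=
  ∀ (v : V) (l : ℕ), 1 ≤ l → (∃ e : G.Edge, G.rng e = v) →
    G.ConnectsToLoop (G.gv v l)

/-- The labeled space `(E, ℒ, ℰ)` is strongly cofinal. -/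
def StronglyCofinal : Prop :=
  ∀ x : ℕ → Λ, (∀ n : ℕ, 1 ≤ n → G.IsLabel (wordPrefix x n)) →
    ∀ (v : V) (l : ℕ), (∃ e : G.Edge, G.rng e = v) → 1 ≤ l →
      ∃ N : ℕ, 1 ≤ N ∧ ∃ (m : ℕ) (lam : Fin m → List Λ),
        (∀ i, G.IsLabel (lam i)) ∧
        G.range' (wordPrefix x N) ⊆ ⋃ i, G.rel (G.gv v l) (lam i)

/-- A subset `H ⊆ ℰ` is hereditary: it is closed under finite unions, relative ranges,
and subsets belonging to `ℰ`. -/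
def IsHereditary (H : Set (Set V)) : Prop :=
  (∀ A ∈ H, G.memE A) ∧
  (∀ A ∈ H, ∀ C ∈ H, A ∪ C ∈ H) ∧
  (∀ A ∈ H, ∀ β : List Λ, G.IsLabel β → G.rel A β ∈ H) ∧
  (∀ A ∈ H, ∀ C : Set V, G.memE C → C ⊆ A → C ∈ H)

/-- A subset `H ⊆ ℰ` is saturated: every `A ∈ ℰ` with `r(A, β) ∈ H` for all
`β ∈ ℒ*(E)` belongs to `H`. -/
def IsSaturated (H : Set (Set V)) : Prop :=
  ∀ A : Set V, G.memE A → (∀ β : List Λ, G.IsLabel β → G.rel A β ∈ H) → A ∈ H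

end LabeledGraph

/-! ### Auxiliary word lemmas -/

section WordAux

variable {Λ : Type*}

lemma wpow_succ (w : List Λ) (k : ℕ) : wpow w (k + 1) = w ++ wpow w k := by
  simp [wpow, List.replicate_succ]

lemma wpow_succ' (w : List Λ) (k : ℕ) : wpow w (k + 1) = wpow w k ++ w := by
  simp [wpow, List.replicate_succ']

lemma wpow_one (w : List Λ) : wpow w 1 = w := by simp [wpow]

lemma wpow_length (w : List Λ) (k : ℕ) : (wpow w k).length = w.length * k := by
  induction k with
  | zero => simp [wpow]
  | succ k ih => rw [wpow_succ, List.length_append, ih, Nat.mul_succ]; ring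

lemma wpow_getElem? (w : List Λ) (k j : ℕ) (h : j < w.length * k) :
    (wpow w k)[j]? = w[j % w.length]? := by
  induction k generalizing j with
  | zero => simp at h
  | succ k ih =>
    rw [wpow_succ]
    by_cases hj : j < w.length
    · rw [List.getElem?_append_left hj, Nat.mod_eq_of_lt hj]
    · push_neg at hj
      rw [List.getElem?_append_right hj, ih _ (by rw [Nat.mul_succ] at h; omega),
        Nat.mod_eq_sub_mod hj]

lemma wordPrefix_length (x : ℕ → Λ) (m : ℕ) : (wordPrefix x m).length = m := by
  simp [wordPrefix]

lemma wordPrefix_getElem?_lt (x : ℕ → Λ) {i m : ℕ} (h : i < m) :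
    (wordPrefix x m)[i]? = some (x i) := by
  simp [wordPrefix, List.getElem?_range, h]

lemma wordPrefix_take (x : ℕ → Λ) {m M : ℕ} (h : m ≤ M) :
    (wordPrefix x M).take m = wordPrefix x m := by
  simp [wordPrefix, ← List.map_take, List.take_range, Nat.min_eq_left h]

lemma prefix_wordPrefix (x : ℕ → Λ) {m M : ℕ} (h : m ≤ M) :
    wordPrefix x m <+: wordPrefix x M := by
  rw [← wordPrefix_take x h]; exact List.take_prefix _ _

lemma eq_wordPrefix_of_prefix {x : ℕ → Λ} {β : List Λ} {M : ℕ}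
    (h : β <+: wordPrefix x M) : β = wordPrefix x β.length := by
  have hm : β.length ≤ M := by
    have := h.length_le; rwa [wordPrefix_length] at this
  conv_lhs => rw [List.prefix_iff_eq_take.mp h]
  rw [wordPrefix_take x hm]

lemma wordPrefix_add (x : ℕ → Λ) (m r : ℕ) :
    wordPrefix x (m + r) = wordPrefix x m ++ (List.range r).map (fun i => x (m + i)) := by
  simp [wordPrefix, List.range_add, Function.comp_def]

lemma per_mul {x : ℕ → Λ} {t : ℕ} (h : ∀ i, x (i + t) = x i) :
    ∀ n i, x (i + t * n) = x i := by
  intro n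
  induction n with
  | zero => simp
  | succ n ihn =>
    intro i
    rw [Nat.mul_succ, ← Nat.add_assoc, h (i + t * n), ihn i]

lemma wordPrefix_mul {x : ℕ → Λ} {t : ℕ} (h : ∀ i, x (i + t) = x i) (k : ℕ) :
    wordPrefix x (t * k) = wpow (wordPrefix x t) k := by
  induction k with
  | zero => simp [wpow, wordPrefix]
  | succ k ih =>
    rw [wpow_succ', ← ih, Nat.mul_succ, wordPrefix_add]
    congr 1
    have : ∀ i, x (t * k + i) = x i := by
      intro i
      rw [Nat.add_comm]
      exact per_mul h k i
    simp only [this]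
    rfl

lemma per_gcd {x : ℕ → Λ} :
    ∀ a b, (∀ i, x (i + a) = x i) → (∀ i, x (i + b) = x i) →
      ∀ i, x (i + Nat.gcd a b) = x i := by
  intro a
  induction a using Nat.strong_induction_on with
  | _ a ih =>
    intro b hpa hpb i
    rcases Nat.eq_zero_or_pos a with rfl | hapos
    · rw [Nat.gcd_zero_left]; exact hpb i
    · rw [Nat.gcd_rec]
      have hmod : ∀ j, x (j + b % a) = x j := by
        intro j
        calc x (j + b % a) = x (j + b % a + a * (b / a)) := (per_mul hpa _ _).symm
          _ = x (j + b) := by rw [Nat.add_assoc, Nat.mod_add_div]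
          _ = x j := hpb j
      exact ih (b % a) (Nat.mod_lt b hapos) a hmod hpa i

end WordAux

/-! ### Auxiliary graph lemmas -/

namespace LabeledGraph

variable {V : Type*} {Λ : Type*} {G : LabeledGraph V Λ}

lemma PathLabel.ne_nil {u w : V} {α : List Λ} (h : G.PathLabel u w α) : α ≠ [] := by
  cases h <;> simp

lemma PathLabel.append {u w v : V} {α β : List Λ} (h1 : G.PathLabel u w α)
    (h2 : G.PathLabel w v β) : G.PathLabel u v (α ++ β) := by
  induction h1 with
  | single e => exact .cons e h2
  | cons e h ih => exact .cons e (ih h2)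

lemma PathLabel.of_prefix {u w : V} {α β : List Λ} (h : G.PathLabel u w α)
    (hp : β <+: α) (hne : β ≠ []) : ∃ w', G.PathLabel u w' β := by
  induction h generalizing β with
  | single e =>
    obtain ⟨t, ht⟩ := hp
    match β, hne with
    | b :: bs, _ =>
      simp only [List.cons_append, List.cons.injEq] at ht
      obtain ⟨rfl, ht⟩ := ht
      obtain ⟨rfl, -⟩ := List.append_eq_nil_iff.mp ht
      exact ⟨_, .single e⟩
  | cons e h ih =>
    obtain ⟨t, ht⟩ := hp
    match β, hne with
    | b :: bs, _ =>
      simp only [List.cons_append, List.cons.injEq] at ht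
      obtain ⟨rfl, ht⟩ := ht
      rcases eq_or_ne bs [] with rfl | hbs
      · exact ⟨_, .single e⟩
      · obtain ⟨w', hw'⟩ := ih ⟨t, ht⟩ hbs
        exact ⟨w', .cons e hw'⟩

lemma exists_path_of_length (hS : G.Standing) (u : V) :
    ∀ n : ℕ, 1 ≤ n → ∃ (w : V) (γ : List Λ), γ.length = n ∧ G.PathLabel u w γ := by
  have main : ∀ n : ℕ, ∃ (w : V) (γ : List Λ), γ.length = n + 1 ∧ G.PathLabel u w γ := by
    intro n
    induction n with
    | zero =>
      obtain ⟨e, he⟩ := hS.no_sinks u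
      exact ⟨G.rng e, [G.lbl e], rfl, he ▸ .single e⟩
    | succ n ih =>
      obtain ⟨w, γ, hlen, p⟩ := ih
      obtain ⟨e, he⟩ := hS.no_sinks w
      refine ⟨G.rng e, γ ++ [G.lbl e], by simp [hlen], p.append (he ▸ .single e)⟩
  intro n hn
  obtain ⟨m, rfl⟩ := Nat.exists_eq_add_of_le hn
  have := main m
  simpa [Nat.add_comm] using this

end LabeledGraph


/-- Part of the proof of Proposition 4.6: if `A ∈ ℰ` is nonempty and `δ ∈ ℒ*(E)` is a
word of smallest length with `ℒ(AE^{|δ|n}) = {δⁿ}` for all `n ≥ 1`, then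
(1) `ℒ(AE^{≥1}) = {δⁿδ' : n ≥ 0, δ'` an initial path of `δ}`, and (2) every loop
`(α, A)` satisfies `α = δᵐ` for some `m ≥ 1`. -/
theorem stmt_14 {V : Type*} {Λ : Type*} [Countable V] [Countable Λ]
    (G : LabeledGraph V Λ) [Countable G.Edge] (hS : G.Standing)
    (A : Set V) (hA : G.memE A) (hAne : A.Nonempty)
    (δ : List Λ) (hδ : δ ≠ [])
    (hper : ∀ n : ℕ, 1 ≤ n → G.lblFrom A (δ.length * n) = {wpow δ n})
    (hmin : ∀ δ'' : List Λ, δ'' ≠ [] →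
      (∀ n : ℕ, 1 ≤ n → G.lblFrom A (δ''.length * n) = {wpow δ'' n}) →
      δ.length ≤ δ''.length) :
    (G.lblFromGe A =
      {w : List Λ | w ≠ [] ∧ ∃ (n : ℕ) (δ' : List Λ), δ' <+: δ ∧ w = wpow δ n ++ δ'}) ∧
    (∀ α : List Λ, G.IsLabel α → A ⊆ G.rel A α →
      ∃ m : ℕ, 1 ≤ m ∧ α = wpow δ m) := by

  obtain ⟨a0, ha0⟩ := hAne
  obtain ⟨e0, -⟩ := hS.no_sinks a0
  have hd : 0 < δ.length := List.length_pos_iff.mpr hδ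
  -- the infinite periodic word x = δ^∞
  set x : ℕ → Λ := fun i => δ.getD (i % δ.length) (G.lbl e0) with hxdef
  have hx : ∀ i, δ[i % δ.length]? = some (x i) := by
    intro i
    have hlt : i % δ.length < δ.length := Nat.mod_lt _ hd
    simp only [hxdef, List.getD, List.getElem?_eq_getElem hlt,
      Option.getD_some]
  have hPerd : ∀ i, x (i + δ.length) = x i := by
    intro i; simp [hxdef, Nat.add_mod_right]
  have key : ∀ k : ℕ, wordPrefix x (δ.length * k) = wpow δ k := by
    intro k
    refine List.ext_getElem? fun i => ?_
    by_cases hi : i < δ.length * k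
    · rw [wordPrefix_getElem?_lt x hi, wpow_getElem? δ k i hi, hx i]
    · rw [List.getElem?_eq_none, List.getElem?_eq_none]
      · rw [wpow_length]; omega
      · rw [wordPrefix_length]; omega
  have hδeq : δ = wordPrefix x δ.length := by
    have := key 1; rw [Nat.mul_one, wpow_one] at this; exact this.symm
  -- every label from A is a prefix of δ^∞
  have hstar : ∀ β : List Λ, β ∈ G.lblFromGe A → β = wordPrefix x β.length := by
    rintro β ⟨u, hu, w, p⟩
    have hβne : β ≠ [] := p.ne_nil
    have hm : 1 ≤ β.length := List.length_pos_iff.mpr hβne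
    have hle : β.length ≤ δ.length * β.length := Nat.le_mul_of_pos_left _ hd
    rcases Nat.eq_or_lt_of_le hle with heq | hlt
    · have hmem : β ∈ G.lblFrom A (δ.length * β.length) := ⟨heq, u, hu, w, p⟩
      rw [hper β.length hm, Set.mem_singleton_iff] at hmem
      conv_rhs => rw [heq]
      rw [key β.length]
      exact hmem
    · obtain ⟨w', γ, hγlen, pγ⟩ :=
        LabeledGraph.exists_path_of_length hS w (δ.length * β.length - β.length) (by omega)
      have pfull : G.PathLabel u w' (β ++ γ) := p.append pγ
      have hmem : β ++ γ ∈ G.lblFrom A (δ.length * β.length) :=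
        ⟨by simp [hγlen]; omega, u, hu, w', pfull⟩
      rw [hper β.length hm, Set.mem_singleton_iff] at hmem
      have hpre : β <+: wordPrefix x (δ.length * β.length) := by
        rw [key]; exact hmem ▸ List.prefix_append β γ
      exact eq_wordPrefix_of_prefix hpre
  constructor
  · -- Part (1)
    ext β
    constructor
    · rintro ⟨u, hu, w, p⟩
      have hβ := hstar β ⟨u, hu, w, p⟩
      refine ⟨p.ne_nil, β.length / δ.length, wordPrefix x (β.length % δ.length), ?_, ?_⟩
      · conv_rhs => rw [hδeq]
        exact prefix_wordPrefix x (Nat.mod_lt _ hd).le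
      · calc β = wordPrefix x β.length := hβ
          _ = wordPrefix x (δ.length * (β.length / δ.length) + β.length % δ.length) := by
              rw [Nat.div_add_mod]
          _ = wordPrefix x (δ.length * (β.length / δ.length)) ++
              (List.range (β.length % δ.length)).map
                (fun i => x (δ.length * (β.length / δ.length) + i)) := wordPrefix_add x _ _
          _ = wpow δ (β.length / δ.length) ++ wordPrefix x (β.length % δ.length) := by
              rw [key]
              congr 1
              refine List.map_congr_left fun i _ => ?_
              rw [Nat.add_comm]
              exact per_mul hPerd _ i
    · rintro ⟨hne, n, δ', hδ', rfl⟩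
      obtain ⟨w, γ, hlen, p⟩ :=
        LabeledGraph.exists_path_of_length hS a0 (δ.length * (n + 1)) (Nat.mul_pos hd (Nat.succ_pos n))
      have hmem : γ ∈ G.lblFrom A (δ.length * (n + 1)) := ⟨hlen, a0, ha0, w, p⟩
      rw [hper (n + 1) (by omega), Set.mem_singleton_iff] at hmem
      have hpre : wpow δ n ++ δ' <+: γ := by
        rw [hmem, wpow_succ']
        obtain ⟨t, ht⟩ := hδ'
        exact ⟨t, by rw [List.append_assoc, ht]⟩
      obtain ⟨w', p'⟩ := p.of_prefix hpre hne
      exact ⟨a0, ha0, w', p'⟩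
  · -- Part (2)
    intro α hlab hsub
    obtain ⟨u0, hu0, p0⟩ := hsub ha0
    have hαne : α ≠ [] := p0.ne_nil
    have hapos : 0 < α.length := List.length_pos_iff.mpr hαne
    -- powers of α occur as labels from A
    have chain : ∀ k : ℕ, ∃ u ∈ A, G.PathLabel u a0 (wpow α (k + 1)) := by
      intro k
      induction k with
      | zero => exact ⟨u0, hu0, by rw [wpow_one]; exact p0⟩
      | succ k ih =>
        obtain ⟨u, hu, p⟩ := ih
        obtain ⟨u', hu', p'⟩ := hsub hu
        exact ⟨u', hu', by rw [wpow_succ]; exact p'.append p⟩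
    have hwpα : ∀ k : ℕ, wpow α (k + 1) = wordPrefix x (α.length * (k + 1)) := by
      intro k
      obtain ⟨u, hu, p⟩ := chain k
      have := hstar _ ⟨u, hu, a0, p⟩
      rwa [wpow_length] at this
    -- x has period |α|
    have hPera : ∀ i, x (i + α.length) = x i := by
      intro i
      have h1 : i + α.length < α.length * (i + 2) := by
        have h2 : i ≤ α.length * i := Nat.le_mul_of_pos_left _ hapos
        calc i + α.length < i + 2 * α.length := by omega
          _ ≤ α.length * i + 2 * α.length := by omega
          _ = α.length * (i + 2) := by ring
      have h2 : i < α.length * (i + 2) := by omega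
      have e1 := congrArg (fun l : List Λ => l[i + α.length]?) (hwpα (i + 1))
      simp only [wpow_getElem? α (i + 2) _ h1, wordPrefix_getElem?_lt x h1] at e1
      have e2 := congrArg (fun l : List Λ => l[i]?) (hwpα (i + 1))
      simp only [wpow_getElem? α (i + 2) _ h2, wordPrefix_getElem?_lt x h2] at e2
      rw [Nat.add_mod_right] at e1
      rw [e1] at e2
      exact Option.some_injective _ e2
    -- the gcd of the two periods
    have hPerg := per_gcd α.length δ.length hPera hPerd
    have hgpos : 0 < Nat.gcd α.length δ.length := Nat.gcd_pos_of_pos_right _ hd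
    set g := Nat.gcd α.length δ.length with hgdef
    set w : List Λ := wordPrefix x g with hwdef
    have hwlen : w.length = g := wordPrefix_length x g
    have hforward : ∀ n : ℕ, ∀ β ∈ G.lblFrom A (g * n), β = wpow w n := by
      rintro n β ⟨hblen, u, hu, w', p⟩
      have := hstar β ⟨u, hu, w', p⟩
      rw [hblen] at this
      rw [this, wordPrefix_mul hPerg n]
    have hwper : ∀ n : ℕ, 1 ≤ n → G.lblFrom A (w.length * n) = {wpow w n} := by
      intro n hn
      rw [hwlen]
      ext β
      simp only [Set.mem_singleton_iff]
      constructor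
      · exact hforward n β
      · rintro rfl
        obtain ⟨w', γ, hlen, p⟩ :=
          LabeledGraph.exists_path_of_length hS a0 (g * n) (Nat.mul_pos hgpos (by omega))
        have hmem : γ ∈ G.lblFrom A (g * n) := ⟨hlen, a0, ha0, w', p⟩
        have := hforward n γ hmem
        exact this ▸ hmem
    have hwne : w ≠ [] := by
      intro h
      rw [h] at hwlen
      simp at hwlen
      omega
    have hge : δ.length ≤ g := hwlen ▸ hmin w hwne hwper
    have hgd : g ∣ δ.length := Nat.gcd_dvd_right _ _
    have hgeq : g = δ.length := le_antisymm (Nat.le_of_dvd hd hgd) hge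
    have hda : δ.length ∣ α.length := hgeq ▸ Nat.gcd_dvd_left α.length δ.length
    refine ⟨α.length / δ.length, ?_, ?_⟩
    · exact Nat.div_pos (Nat.le_of_dvd hapos hda) hd
    · have hα := hstar α ⟨u0, hu0, a0, p0⟩
      calc α = wordPrefix x α.length := hα
        _ = wordPrefix x (δ.length * (α.length / δ.length)) := by
            rw [Nat.mul_div_cancel' hda]
        _ = wpow δ (α.length / δ.length) := key _
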